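/- For a finite poset P, the Möbius function satisfies μ_P(a,b) = δ(a,b) + ∑_{k=1}^∞ (-1)^k · #{chains a_0 < a_1 < ⋯ < a_k with a_0 = a, a_k = b} (a finite sum, known as Philip Hall's theorem). -/

import Mathlib

noncomputable section
open Classical

/-- The incidence matrix `ξ_P(x,y) = 1` if `x ≤ y`, `0` otherwise, over `ℚ`. -/
def xiMatrix (P : Type) [PartialOrder P] [Fintype P] : Matrix P P ℚ :=
  fun a b => if a ≤ b then 1 else 0

/-- The number of chains `a = a₀ < a₁ < ⋯ < a_k = b` in `P` (with `k` steps). -/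
def chainCount (P : Type) [PartialOrder P] (a b : P) (k : ℕ) : ℕ :=
  Nat.card {c : Fin (k + 1) → P // StrictMono c ∧ c 0 = a ∧ c (Fin.last k) = b}

namespace PhilipHall

variable {P : Type} [PartialOrder P] [Fintype P]

/-- The strict incidence matrix. -/
def NM (P : Type) [PartialOrder P] [Fintype P] : Matrix P P ℚ :=
  fun a b => if a < b then 1 else 0

lemma fin_one_eq_zero (i : Fin (0 + 1)) : i = 0 :=
  Fin.ext (Nat.lt_one_iff.mp i.isLt)

lemma chainCount_zero (a b : P) : chainCount P a b 0 = if a = b then 1 else 0 := by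
  unfold chainCount
  by_cases h : a = b
  · subst h
    rw [if_pos rfl]
    have : Unique {c : Fin 1 → P // StrictMono c ∧ c 0 = a ∧ c (Fin.last 0) = a} := by
      refine ⟨⟨⟨fun _ => a, ?_, rfl, rfl⟩⟩, ?_⟩
      · intro i j hij
        rw [fin_one_eq_zero i, fin_one_eq_zero j] at hij
        exact absurd hij (lt_irrefl 0)
      · rintro ⟨c, hm, h0, hl⟩
        apply Subtype.ext; funext i
        rw [fin_one_eq_zero i]; exact h0
    exact Nat.card_unique
  · rw [if_neg h]
    have : IsEmpty {c : Fin 1 → P // StrictMono c ∧ c 0 = a ∧ c (Fin.last 0) = b} := by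
      refine ⟨?_⟩; rintro ⟨c, hm, h0, hl⟩
      apply h
      rw [fin_one_eq_zero (Fin.last 0)] at hl
      rw [← h0, ← hl]
    exact Nat.card_of_isEmpty

/-- Peeling off the first step of a chain. -/
def chainEquiv (a b : P) (k : ℕ) :
    {c : Fin (k + 2) → P // StrictMono c ∧ c 0 = a ∧ c (Fin.last (k + 1)) = b} ≃
    Σ x : P, {c : Fin (k + 1) → P //
      (StrictMono c ∧ c 0 = x ∧ c (Fin.last k) = b) ∧ a < x} where
  toFun c := ⟨c.1 1,
    ⟨c.1 ∘ Fin.succ,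
      ⟨⟨c.2.1.comp Fin.strictMono_succ,
        by show c.1 (Fin.succ 0) = c.1 1; rw [Fin.succ_zero_eq_one],
        by show c.1 ((Fin.last k).succ) = b; rw [Fin.succ_last]; exact c.2.2.2⟩,
        by
          have := c.2.1 (show (0 : Fin (k + 2)) < 1 by simp [Fin.lt_def])
          rwa [c.2.2.1] at this⟩⟩⟩
  invFun p := ⟨Fin.cases a p.2.1, by
    constructor
    · rw [Fin.strictMono_iff_lt_succ]
      intro i
      induction i using Fin.cases with
      | zero =>
        simp only [Fin.castSucc_zero, Fin.cases_zero, Fin.cases_succ]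
        rw [p.2.2.1.2.1]; exact p.2.2.2
      | succ j =>
        rw [← Fin.succ_castSucc]
        simp only [Fin.cases_succ]
        exact p.2.2.1.1 (Fin.castSucc_lt_succ (i := j))
    · refine ⟨Fin.cases_zero, ?_⟩
      rw [← Fin.succ_last]
      simp only [Fin.cases_succ]
      exact p.2.2.1.2.2⟩
  left_inv := by
    rintro ⟨c, hm, h0, hl⟩
    apply Subtype.ext
    funext i
    induction i using Fin.cases with
    | zero => simp only [Fin.cases_zero]; exact h0.symm
    | succ j => simp only [Fin.cases_succ]; rfl
  right_inv := by
    rintro ⟨x, c, ⟨⟨hm, h0, hl⟩, hax⟩⟩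
    have hx : Fin.cases (motive := fun _ : Fin (k + 2) => P) a c 1 = x := by
      rw [← Fin.succ_zero_eq_one]
      simp only [Fin.cases_succ]
      exact h0
    apply Sigma.ext
    · dsimp only
      exact hx
    · dsimp only
      rw [Subtype.heq_iff_coe_eq (by intro c'; rw [hx])]
      funext i
      show (Fin.cases a c : Fin (k + 2) → P) i.succ = c i
      simp only [Fin.cases_succ]

lemma chainCount_succ (a b : P) (k : ℕ) :
    chainCount P a b (k + 1) = ∑ x : P, if a < x then chainCount P x b k else 0 := by
  unfold chainCount
  rw [Nat.card_congr (chainEquiv a b k)]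
  letI : ∀ x : P, Fintype {c : Fin (k + 1) → P //
      (StrictMono c ∧ c 0 = x ∧ c (Fin.last k) = b) ∧ a < x} := fun x => Fintype.ofFinite _
  rw [Nat.card_eq_fintype_card, Fintype.card_sigma]
  apply Finset.sum_congr rfl
  intro x _
  by_cases h : a < x
  · rw [if_pos h, ← Nat.card_eq_fintype_card]
    apply Nat.card_congr
    exact Equiv.subtypeEquivRight (fun c => by tauto)
  · rw [if_neg h, ← Nat.card_eq_fintype_card]
    have : IsEmpty {c : Fin (k + 1) → P //
        (StrictMono c ∧ c 0 = x ∧ c (Fin.last k) = b) ∧ a < x} :=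
      ⟨fun c => h c.2.2⟩
    exact Nat.card_of_isEmpty

lemma chainCount_eq_zero (a b : P) (k : ℕ) (hk : Fintype.card P < k + 1) :
    chainCount P a b k = 0 := by
  unfold chainCount
  have : IsEmpty {c : Fin (k + 1) → P // StrictMono c ∧ c 0 = a ∧ c (Fin.last k) = b} := by
    refine ⟨?_⟩
    rintro ⟨c, hm, -, -⟩
    have := Fintype.card_le_of_injective c hm.injective
    simp only [Fintype.card_fin] at this
    omega
  exact Nat.card_of_isEmpty

lemma NM_pow_apply (a b : P) (k : ℕ) :
    ((NM P) ^ k) a b = (chainCount P a b k : ℚ) := by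
  induction k generalizing a with
  | zero =>
    rw [pow_zero, chainCount_zero]
    by_cases h : a = b <;> simp [Matrix.one_apply, h]
  | succ k ih =>
    rw [pow_succ', Matrix.mul_apply, chainCount_succ]
    push_cast
    apply Finset.sum_congr rfl
    intro x _
    rw [ih]
    unfold NM
    by_cases h : a < x <;> simp [h]

lemma NM_pow_card : (NM P) ^ (Fintype.card P + 1) = 0 := by
  ext a b
  rw [NM_pow_apply, chainCount_eq_zero a b _ (by omega)]
  simp

lemma neg_NM_pow (i : ℕ) : (-(NM P)) ^ i = ((-1 : ℚ) ^ i) • ((NM P) ^ i) := by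
  induction i with
  | zero => simp
  | succ i ih =>
    rw [pow_succ, pow_succ, pow_succ, ih, Matrix.smul_mul, mul_neg, smul_neg,
      mul_neg_one, neg_smul]

lemma xiMatrix_eq : xiMatrix P = 1 + NM P := by
  ext a b
  simp only [xiMatrix, NM, Matrix.add_apply, Matrix.one_apply]
  by_cases he : a = b
  · subst he; simp
  · rw [if_neg he, zero_add]
    by_cases hle : a ≤ b
    · rw [if_pos hle, if_pos (lt_of_le_of_ne hle he)]
    · rw [if_neg hle, if_neg (fun h => hle h.le)]

end PhilipHall

open PhilipHall in
/-- Philip Hall's theorem: for a finite poset `P`, the incidence matrix `ξ_P` is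
invertible and the Möbius function `μ_P = ξ_P⁻¹` satisfies
`μ_P(a,b) = δ(a,b) + ∑_{k≥1} (-1)^k ⋅ #{chains a = a₀ < ⋯ < a_k = b}`. -/
theorem stmt13 (P : Type) [PartialOrder P] [Fintype P] :
    IsUnit (xiMatrix P).det ∧
    ∀ a b : P, (xiMatrix P)⁻¹ a b =
      (if a = b then 1 else 0) +
        ∑ᶠ k : ℕ, ((-1 : ℚ)) ^ (k + 1) * (chainCount P a b (k + 1) : ℚ) := by
  set n := Fintype.card P with hn
  set M : Matrix P P ℚ := ∑ i ∈ Finset.range (n + 1), (-(NM P)) ^ i with hM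
  have hNpow : (-(NM P)) ^ (n + 1) = 0 := by
    rw [neg_NM_pow, NM_pow_card, smul_zero]
  have hgs := geom_sum_mul (-(NM P)) (n + 1)
  rw [hNpow, zero_sub, ← hM] at hgs
  have h3 : -(NM P) - 1 = -(xiMatrix P) := by
    rw [xiMatrix_eq, neg_add]; abel
  rw [h3, mul_neg, neg_inj] at hgs
  have hdet : IsUnit (xiMatrix P).det := Matrix.isUnit_det_of_left_inverse hgs
  have hinv : (xiMatrix P)⁻¹ = M := Matrix.inv_eq_left_inv hgs
  refine ⟨hdet, fun a b => ?_⟩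
  rw [hinv, hM, Matrix.sum_apply]
  have hterm : ∀ i, ((-(NM P)) ^ i) a b = (-1 : ℚ) ^ i * (chainCount P a b i : ℚ) := by
    intro i
    rw [neg_NM_pow, Matrix.smul_apply, NM_pow_apply, smul_eq_mul]
  have hsum : ∑ᶠ k : ℕ, ((-1 : ℚ)) ^ (k + 1) * (chainCount P a b (k + 1) : ℚ)
      = ∑ k ∈ Finset.range n, ((-1 : ℚ)) ^ (k + 1) * (chainCount P a b (k + 1) : ℚ) := by
    apply finsum_eq_finset_sum_of_support_subset
    intro k hk
    simp only [Function.mem_support] at hk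
    simp only [Finset.coe_range, Set.mem_Iio]
    by_contra hkn
    push_neg at hkn
    rw [chainCount_eq_zero a b (k + 1) (by omega)] at hk
    simp at hk
  rw [hsum, Finset.sum_range_succ']
  simp only [hterm]
  rw [chainCount_zero]
  by_cases h : a = b <;> simp [h, add_comm]
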